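/- The category KSob of all k-bounded sober spaces (a full subcategory of Top₀) is not reflective in Top₀, i.e., the inclusion functor KSob → Top₀ has no left adjoint. -/

import Mathlib

/-
Let `X` be the chain `0 < 1 < 2 < ⋯` topped by two incomparable upper bounds `left` and `right`,
with the Alexandrov (upper set) topology. In such a space closed irreducible sets are ideals and the
specialization order is the given order, so `X` is k-bounded sober because every nonempty subset of
`X` with a supremum contains it. The subspace `A = X \ {right}` is not: the chain is an ideal whose
supremum `left` lies outside it. But `A` is the equalizer of the identity and the map folding
`right` onto `left`, and the reflection of an equalizer of maps between k-bounded sober spaces is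
homeomorphic to the equalizer itself, so `A` would be k-bounded sober.
-/

open TopologicalSpace

/-- The b-topology associated with a topological space `(X, t)`: the topology with base
`{U ∩ cl({x}) : x ∈ U, U open}`. -/
def bTop (X : Type) (t : TopologicalSpace X) : TopologicalSpace X :=
  TopologicalSpace.generateFrom
    {s | ∃ (U : Set X) (x : X), @IsOpen X t U ∧ x ∈ U ∧ s = U ∩ @closure X t {x}}

/-- The specialization order of `(X, t)`: `x ≤ y` iff `x ∈ cl({y})`. -/
def specLE {X : Type} (t : TopologicalSpace X) (x y : X) : Prop :=
  x ∈ @closure X t {y}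

/-- The subspace topology on a subset. -/
def subTop {X : Type} (t : TopologicalSpace X) (A : Set X) : TopologicalSpace A :=
  TopologicalSpace.induced Subtype.val t

/-- A class of topological spaces, viewed as the object class of a full subcategory of Top. -/
abbrev SpaceClass : Type 1 := (X : Type) → TopologicalSpace X → Prop

/-- All members of `K` are T₀ (i.e. `K` is a subcategory of `Top₀`). -/
def AllT0 (K : SpaceClass) : Prop := ∀ X t, K X t → @T0Space X t

/-- `K` is closed under homeomorphisms. -/
def ClosedUnderHomeo (K : SpaceClass) : Prop :=
  ∀ (X Y : Type) (tX : TopologicalSpace X) (tY : TopologicalSpace Y),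
    K X tX → Nonempty (@Homeomorph X Y tX tY) → K Y tY

/-- `K ⊄ Top₁`: `K` contains a space that is not T₁. -/
def NotSubT1 (K : SpaceClass) : Prop := ∃ X t, K X t ∧ ¬ @T1Space X t

/-- `μ : X → Xk` is a K-reflection for `X`: `Xk ∈ K`, `μ` is continuous and every continuous map
from `X` to a member of `K` factors uniquely (continuously) through `μ`. -/
def IsReflection (K : SpaceClass) {X Xk : Type} (tX : TopologicalSpace X)
    (tk : TopologicalSpace Xk) (μ : X → Xk) : Prop :=
  K Xk tk ∧ @Continuous X Xk tX tk μ ∧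
    ∀ (Z : Type) (tZ : TopologicalSpace Z), K Z tZ →
      ∀ f : X → Z, @Continuous X Z tX tZ f →
        ∃! g : Xk → Z, @Continuous Xk Z tk tZ g ∧ g ∘ μ = f

/-- `K` is reflective in `Top₀`: every T₀ space admits a K-reflection. -/
def IsReflective (K : SpaceClass) : Prop :=
  ∀ (X : Type) (tX : TopologicalSpace X), @T0Space X tX →
    ∃ (Xk : Type) (tk : TopologicalSpace Xk) (μ : X → Xk), IsReflection K tX tk μ

/-- `K` is b-closed-hereditary. -/
def BClosedHereditary (K : SpaceClass) : Prop :=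
  ∀ (X : Type) (tX : TopologicalSpace X) (A : Set X),
    K X tX → @IsClosed X (bTop X tX) A → K A (subTop tX A)

/-- `K` is productive. -/
def Productive (K : SpaceClass) : Prop :=
  ∀ (I : Type) (X : I → Type) (t : ∀ i, TopologicalSpace (X i)),
    (∀ i, K (X i) (t i)) → K (∀ i, X i) (@Pi.topologicalSpace I X t)

/-- `K` has equalizers. -/
def HasEqualizers (K : SpaceClass) : Prop :=
  ∀ (X Y : Type) (tX : TopologicalSpace X) (tY : TopologicalSpace Y),
    K X tX → K Y tY → ∀ f g : X → Y, @Continuous X Y tX tY f → @Continuous X Y tX tY g →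
      K {x | f x = g x} (subTop tX {x | f x = g x})

/-- `(X, t)` is sober: T₀ and every irreducible closed set is the closure of a point. -/
def Sober (X : Type) (t : TopologicalSpace X) : Prop := @T0Space X t ∧ @QuasiSober X t

/-- A T₀ space is k-bounded sober if every irreducible closed set having a supremum in the
specialization order is the closure of a unique point. -/
def KBoundedSober (X : Type) (t : TopologicalSpace X) : Prop :=
  ∀ F : Set X, @IsClosed X t F → @IsIrreducible X t F →
    (∃ s : X, (∀ a ∈ F, specLE t a s) ∧ ∀ b : X, (∀ a ∈ F, specLE t a b) → specLE t s b) →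
    ∃! x : X, F = @closure X t {x}

/-- The full subcategory of k-bounded sober spaces. -/
def KSobClass : SpaceClass := fun X t => @T0Space X t ∧ KBoundedSober X t

open Set

def IsSpecLUB {X : Type} (t : TopologicalSpace X) (F : Set X) (s : X) : Prop :=
  (∀ a ∈ F, specLE t a s) ∧ ∀ b : X, (∀ a ∈ F, specLE t a b) → specLE t s b

section KBoundedSober

variable {X Y : Type} [tX : TopologicalSpace X] [tY : TopologicalSpace Y]

lemma KBoundedSober.mem_of_isSpecLUB (h : KBoundedSober X tX) {F : Set X} (hF : IsClosed F)
    (hirr : IsIrreducible F) {s : X} (hs : IsSpecLUB tX F s) : s ∈ F := by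
  obtain ⟨x, hx, -⟩ := h F hF hirr ⟨s, hs⟩
  rw [hx]
  exact hs.2 x fun a ha => by rwa [hx] at ha

lemma kBoundedSober_of_forall_mem [T0Space X]
    (h : ∀ F : Set X, IsClosed F → IsIrreducible F → ∀ s, IsSpecLUB tX F s → s ∈ F) :
    KBoundedSober X tX := by
  intro F hF hirr ⟨s, hs⟩
  have hFs : F = closure {s} :=
    subset_antisymm hs.1 (closure_minimal (singleton_subset_iff.2 (h F hF hirr s hs)) hF)
  exact ⟨s, hFs, fun y hy => (inseparable_iff_closure_eq.2 (hy ▸ hFs)).eq⟩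

lemma kBoundedSober_iff_forall_mem [T0Space X] :
    KBoundedSober X tX ↔
      ∀ F : Set X, IsClosed F → IsIrreducible F → ∀ s, IsSpecLUB tX F s → s ∈ F :=
  ⟨fun h _ hF hirr _ hs => h.mem_of_isSpecLUB hF hirr hs, kBoundedSober_of_forall_mem⟩

lemma Homeomorph.specLE_iff (e : X ≃ₜ Y) {a b : X} : specLE tY (e a) (e b) ↔ specLE tX a b := by
  simp only [specLE, ← specializes_iff_mem_closure, e.isInducing.specializes_iff]

lemma Homeomorph.isSpecLUB_image_iff (e : X ≃ₜ Y) {F : Set X} {s : X} :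
    IsSpecLUB tY (e '' F) (e s) ↔ IsSpecLUB tX F s := by
  simp only [IsSpecLUB, forall_mem_image, e.surjective.forall, e.specLE_iff]

lemma KBoundedSober.of_homeomorph [T0Space X] (e : X ≃ₜ Y) (h : KBoundedSober Y tY) :
    KBoundedSober X tX :=
  kBoundedSober_of_forall_mem fun _ hF hirr _ hs =>
    e.injective.mem_set_image.1 <| h.mem_of_isSpecLUB (e.isClosed_image.2 hF)
      (hirr.image e e.continuous.continuousOn) (e.isSpecLUB_image_iff.2 hs)

end KBoundedSober

section Reflection

variable {K : SpaceClass} {A Xk : Type} [tA : TopologicalSpace A] [tk : TopologicalSpace Xk]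
  {μ : A → Xk}

lemma IsReflection.hom_ext (hμ : IsReflection K tA tk μ) {Z : Type} [tZ : TopologicalSpace Z]
    (hZ : K Z tZ) {g₁ g₂ : Xk → Z} (hg₁ : Continuous g₁) (hg₂ : Continuous g₂)
    (h : g₁ ∘ μ = g₂ ∘ μ) : g₁ = g₂ :=
  (hμ.2.2 Z tZ hZ (g₂ ∘ μ) (hg₂.comp hμ.2.1)).unique ⟨hg₁, h⟩ ⟨hg₂, rfl⟩

/-- The inclusion of the equalizer factors through `μ` by a map landing in the equalizer, and this
map inverts `μ`. -/
lemma IsReflection.nonempty_homeomorph_of_eqLocus {X Z : Type} [tX : TopologicalSpace X]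
    [tZ : TopologicalSpace Z] (hX : K X tX) (hZ : K Z tZ) {f g : X → Z} (hf : Continuous f)
    (hg : Continuous g) {μ : {x | f x = g x} → Xk}
    (hμ : IsReflection K (subTop tX {x | f x = g x}) tk μ) :
    Nonempty ({x | f x = g x} ≃ₜ Xk) := by
  obtain ⟨h, ⟨hc, hhμ⟩, -⟩ := hμ.2.2 X tX hX Subtype.val continuous_subtype_val
  have hfg : f ∘ h = g ∘ h := hμ.hom_ext hZ (hf.comp hc) (hg.comp hc) <| by
    funext a
    change f ((h ∘ μ) a) = g ((h ∘ μ) a)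
    rw [hhμ]
    exact a.2
  let r : Xk → {x | f x = g x} := fun z => ⟨h z, congrFun hfg z⟩
  have hrμ : r ∘ μ = id := funext fun a => Subtype.ext (congrFun hhμ a)
  have hr : Continuous r := hc.subtype_mk _
  have hμr : μ ∘ r = id := hμ.hom_ext hμ.1 (hμ.2.1.comp hr) continuous_id <| by
    rw [Function.comp_assoc, hrμ]; rfl
  exact ⟨{ toFun := μ, invFun := r, left_inv := congrFun hrμ, right_inv := congrFun hμr
           continuous_toFun := hμ.2.1, continuous_invFun := hr }⟩

end Reflection

namespace Topology.IsUpperSet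

variable {α : Type} [tα : TopologicalSpace α]

instance subtype [Preorder α] [Topology.IsUpperSet α] (S : Set α) : Topology.IsUpperSet S :=
  Topology.isUpperSet_iff_nhds.2 fun a => by
    rw [nhds_subtype, nhds_eq_principal_Ici, Filter.comap_principal]
    rfl

instance t0Space [PartialOrder α] [Topology.IsUpperSet α] : T0Space α :=
  (t0Space_iff_inseparable α).2 fun _ _ h =>
    le_antisymm (specializes_iff_le.1 h.specializes') (specializes_iff_le.1 h.specializes)

variable [Preorder α] [Topology.IsUpperSet α]

lemma specLE_iff {a b : α} : specLE tα a b ↔ a ≤ b := by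
  rw [specLE, closure_singleton, mem_Iic]

lemma isSpecLUB_iff {F : Set α} {s : α} : IsSpecLUB tα F s ↔ IsLUB F s := by
  simp only [IsSpecLUB, specLE_iff]
  rfl

lemma isIrreducible_iff {F : Set α} : IsIrreducible F ↔ F.Nonempty ∧ DirectedOn (· ≤ ·) F := by
  refine ⟨fun h => ⟨h.1, fun x hx y hy => ?_⟩, fun ⟨hne, hd⟩ => ⟨hne, ?_⟩⟩
  · obtain ⟨z, hz, hxz, hyz⟩ := h.2 (Ici x) (Ici y) (isOpen_iff_isUpperSet.2 (isUpperSet_Ici x))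
      (isOpen_iff_isUpperSet.2 (isUpperSet_Ici y)) ⟨x, hx, le_rfl⟩ ⟨y, hy, le_rfl⟩
    exact ⟨z, hz, hxz, hyz⟩
  · rintro u v hu hv ⟨x, hx, hxu⟩ ⟨y, hy, hyv⟩
    obtain ⟨z, hz, hxz, hyz⟩ := hd x hx y hy
    exact ⟨z, hz, isOpen_iff_isUpperSet.1 hu hxz hxu, isOpen_iff_isUpperSet.1 hv hyz hyv⟩

end Topology.IsUpperSet

lemma Topology.IsUpperSet.kBoundedSober_iff {α : Type} [tα : TopologicalSpace α] [PartialOrder α]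
    [Topology.IsUpperSet α] :
    KBoundedSober α tα ↔ ∀ F : Set α, IsLowerSet F → F.Nonempty → DirectedOn (· ≤ ·) F →
      ∀ s, IsLUB F s → s ∈ F := by
  simp only [kBoundedSober_iff_forall_mem, isClosed_iff_isLower, isIrreducible_iff, and_imp,
    isSpecLUB_iff]

inductive ForkedChain : Type
  | of : ℕ → ForkedChain
  | left : ForkedChain
  | right : ForkedChain

namespace ForkedChain

protected def le : ForkedChain → ForkedChain → Prop
  | of m, of n => m ≤ n
  | of _, _ => True
  | left, left => True
  | right, right => True
  | _, _ => False

instance : PartialOrder ForkedChain where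
  le := ForkedChain.le
  le_refl x := by cases x <;> simp [ForkedChain.le]
  le_trans x y z := by cases x <;> cases y <;> cases z <;> simp [ForkedChain.le]; omega
  le_antisymm x y := by cases x <;> cases y <;> simp [ForkedChain.le]; omega

@[simp] lemma of_le_of {m n : ℕ} : of m ≤ of n ↔ m ≤ n := Iff.rfl
@[simp] lemma of_le_left (n : ℕ) : of n ≤ left := trivial
@[simp] lemma of_le_right (n : ℕ) : of n ≤ right := trivial
@[simp] lemma not_left_le_of (n : ℕ) : ¬ left ≤ of n := id
@[simp] lemma not_right_le_of (n : ℕ) : ¬ right ≤ of n := id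
@[simp] lemma not_left_le_right : ¬ left ≤ right := id
@[simp] lemma not_right_le_left : ¬ right ≤ left := id

instance : TopologicalSpace ForkedChain := Topology.upperSet ForkedChain

instance : Topology.IsUpperSet ForkedChain := ⟨rfl⟩

lemma isLUB_mem {F : Set ForkedChain} (hF : F.Nonempty) {s : ForkedChain} (hs : IsLUB F s) :
    s ∈ F := by
  by_contra hsF
  suffices ∃ u, (∀ x, x ≤ s → x ≠ s → x ≤ u) ∧ ¬ s ≤ u by
    obtain ⟨u, hu, hsu⟩ := this
    exact hsu (hs.2 fun x hx => hu x (hs.1 hx) (ne_of_mem_of_not_mem hx hsF))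
  cases s with
  | of n =>
    cases n with
    | zero =>
      obtain ⟨x, hx⟩ := hF
      have hx0 := hs.1 hx
      cases x <;> simp_all
    | succ n => exact ⟨of n, fun x hx hne => by cases x <;> simp_all; omega, by simp⟩
  | left => exact ⟨right, fun x hx hne => by cases x <;> simp_all, by simp⟩
  | right => exact ⟨left, fun x hx hne => by cases x <;> simp_all, by simp⟩

lemma kBoundedSober : KBoundedSober ForkedChain inferInstance :=
  Topology.IsUpperSet.kBoundedSober_iff.2 fun _ _ hne _ _ hs => isLUB_mem hne hs

def fold : ForkedChain → ForkedChain
  | right => left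
  | x => x

lemma continuous_fold : Continuous fold :=
  Topology.IsUpperSet.monotone_iff_continuous.1 fun x y h => by
    cases x <;> cases y <;> simp_all [fold]

lemma not_kBoundedSober_fixedPoints :
    ¬ KBoundedSober {x | fold x = x} inferInstance := by
  let F : Set {x | fold x = x} := {x | ∃ n, x.1 = of n}
  have hF : IsLowerSet F := by
    rintro ⟨x, -⟩ ⟨y, -⟩ (hyx : y ≤ x) ⟨n, rfl : x = of n⟩
    cases y with
    | of m => exact ⟨m, rfl⟩
    | left | right => simp at hyx
  have hd : DirectedOn (· ≤ ·) F := by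
    rintro x ⟨m, hm⟩ y ⟨n, hn⟩
    refine ⟨⟨of (max m n), rfl⟩, ⟨_, rfl⟩, ?_, ?_⟩ <;> simp [← Subtype.coe_le_coe, hm, hn]
  have hs : IsLUB F ⟨left, rfl⟩ := by
    refine ⟨fun x ⟨n, hn⟩ => by simp [← Subtype.coe_le_coe, hn], fun ⟨u, hu⟩ hub => ?_⟩
    have hsucc (m : ℕ) : of (m + 1) ≤ u := hub (a := ⟨of (m + 1), rfl⟩) ⟨m + 1, rfl⟩
    cases u with
    | of m => simpa using hsucc m
    | left => exact le_rfl
    | right => exact absurd hu (by simp [fold])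
  rw [Topology.IsUpperSet.kBoundedSober_iff]
  intro h
  obtain ⟨n, hn⟩ := h F hF ⟨⟨of 0, rfl⟩, 0, rfl⟩ hd _ hs
  exact ForkedChain.noConfusion hn

end ForkedChain

/-- the category of k-bounded sober spaces is not reflective in Top₀. -/
theorem statement18 : ¬ IsReflective KSobClass := by
  intro h
  let A := {x : ForkedChain | x.fold = x}
  obtain ⟨Xk, tk, μ, hμ⟩ := h A inferInstance inferInstance
  have hX : KSobClass ForkedChain inferInstance := ⟨inferInstance, ForkedChain.kBoundedSober⟩
  obtain ⟨e⟩ := hμ.nonempty_homeomorph_of_eqLocus hX hX ForkedChain.continuous_fold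
    continuous_id
  exact ForkedChain.not_kBoundedSober_fixedPoints (hμ.1.2.of_homeomorph e)
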